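/- Completion of a partial gauge transformation (Lemma 1.9 of Yekutieli): Let (x, g, a) be a descent datum in a cosimplicial crossed groupoid G, let (x', g') be a partial descent datum (x' ∈ Ob(G⁰), g' ∈ G¹₁(x'_{(0)}, x'_{(1)})), and let (f, c) be a partial gauge transformation (x,g) → (x',g'), i.e. f ∈ G⁰₁(x, x'), c ∈ G¹₂(x_{(0)}) with g' = f_{(1)} ∘ g ∘ D(c) ∘ f_{(0)}⁻¹. Then there exists a unique element a' ∈ G²₂(x'_{(0)}) such that (x', g', a') is a descent datum and (f, c) is a gauge transformation (x,g,a) → (x',g',a'). Explicitly a' = Ad(f_{(0)})(c_{(0,2)}⁻¹ ∘ a ∘ Ad(g_{(0,1)}⁻¹)(c_{(1,2)}) ∘ c_{(0,1)}). -/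

import Mathlib

/-! Crossed groupoids (= crossed modules over groupoids), following Yekutieli,
"Combinatorial descent data for gerbes". -/

structure CrossedGroupoid : Type 1 where
  Obj : Type
  Hom : Obj → Obj → Type
  id : ∀ x, Hom x x
  comp : ∀ {x y z}, Hom y z → Hom x y → Hom x z
  inv : ∀ {x y}, Hom x y → Hom y x
  comp_assoc : ∀ {x y z w} (h : Hom z w) (g : Hom y z) (f : Hom x y),
    comp (comp h g) f = comp h (comp g f)
  id_comp : ∀ {x y} (f : Hom x y), comp (id y) f = f
  comp_id : ∀ {x y} (f : Hom x y), comp f (id x) = f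
  inv_comp : ∀ {x y} (f : Hom x y), comp (inv f) f = id x
  comp_inv : ∀ {x y} (f : Hom x y), comp f (inv f) = id y
  -- the totally disconnected groupoid 𝒢₂, i.e. a family of groups
  G2 : Obj → Type
  mul : ∀ {x}, G2 x → G2 x → G2 x
  one : ∀ x, G2 x
  inv2 : ∀ {x}, G2 x → G2 x
  mul_assoc : ∀ {x} (a b c : G2 x), mul (mul a b) c = mul a (mul b c)
  one_mul : ∀ {x} (a : G2 x), mul (one x) a = a
  mul_one : ∀ {x} (a : G2 x), mul a (one x) = a
  inv2_mul : ∀ {x} (a : G2 x), mul (inv2 a) a = one x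
  -- the twisting: an action of 𝒢₁ on 𝒢₂
  Ad : ∀ {x y}, Hom x y → G2 x → G2 y
  Ad_mul : ∀ {x y} (g : Hom x y) (a b : G2 x), Ad g (mul a b) = mul (Ad g a) (Ad g b)
  Ad_one : ∀ {x y} (g : Hom x y), Ad g (one x) = one y
  Ad_id : ∀ {x} (a : G2 x), Ad (id x) a = a
  Ad_comp : ∀ {x y z} (h : Hom y z) (g : Hom x y) (a : G2 x),
    Ad (comp h g) a = Ad h (Ad g a)
  -- the feedback D : 𝒢₂ → 𝒢₁, identity on objects
  D : ∀ {x}, G2 x → Hom x x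
  D_mul : ∀ {x} (a b : G2 x), D (mul a b) = comp (D a) (D b)
  D_one : ∀ x, D (one x) = id x
  -- equivariance of the feedback
  D_Ad : ∀ {x y} (g : Hom x y) (a : G2 x), D (Ad g a) = comp (comp g (D a)) (inv g)
  -- Peiffer condition
  peiffer : ∀ {x} (a b : G2 x), Ad (D a) b = mul (mul a b) (inv2 a)

namespace CrossedGroupoid

/-- Transport of 1-morphisms along equalities of objects. -/
def hcast (G : CrossedGroupoid) {x x' y y' : G.Obj} (ex : x = x') (ey : y = y')
    (f : G.Hom x y) : G.Hom x' y' := ey ▸ ex ▸ f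

/-- Transport of 2-morphisms along an equality of objects. -/
def cast2 (G : CrossedGroupoid) {x x' : G.Obj} (e : x = x') (a : G.G2 x) : G.G2 x' := e ▸ a

/-- The relation "isomorphic in 𝒢₁". -/
def pi0Rel (G : CrossedGroupoid) : G.Obj → G.Obj → Prop := fun x y => Nonempty (G.Hom x y)

/-- π₀ of a crossed groupoid: isomorphism classes of objects of 𝒢₁. -/
def pi0 (G : CrossedGroupoid) : Type := Quot G.pi0Rel

/-- The right action relation on a hom-set: g' = g ∘ D(a). -/
def homRel (G : CrossedGroupoid) (x x' : G.Obj) : G.Hom x x' → G.Hom x x' → Prop :=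
  fun g g' => ∃ a : G.G2 x, g' = G.comp g (G.D a)

/-- π₁(G, x, x') := 𝒢₁(x,x') / 𝒢₂(x). -/
def pi1' (G : CrossedGroupoid) (x x' : G.Obj) : Type := Quot (G.homRel x x')

/-- π₁(G, x) = Coker(D : 𝒢₂(x) → 𝒢₁(x)) as a quotient set. -/
def pi1 (G : CrossedGroupoid) (x : G.Obj) : Type := G.pi1' x x

/-- π₂(G, x) = Ker(D : 𝒢₂(x) → 𝒢₁(x)). -/
def pi2 (G : CrossedGroupoid) (x : G.Obj) : Type := {a : G.G2 x // G.D a = G.id x}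

end CrossedGroupoid

/-- A morphism of crossed groupoids. -/
structure CrossedGroupoidHom (G H : CrossedGroupoid) where
  obj : G.Obj → H.Obj
  map1 : ∀ {x y : G.Obj}, G.Hom x y → H.Hom (obj x) (obj y)
  map2 : ∀ {x : G.Obj}, G.G2 x → H.G2 (obj x)
  map1_comp : ∀ {x y z : G.Obj} (g : G.Hom y z) (f : G.Hom x y),
    map1 (G.comp g f) = H.comp (map1 g) (map1 f)
  map1_id : ∀ x : G.Obj, map1 (G.id x) = H.id (obj x)
  map2_mul : ∀ {x : G.Obj} (a b : G.G2 x), map2 (G.mul a b) = H.mul (map2 a) (map2 b)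
  map_D : ∀ {x : G.Obj} (a : G.G2 x), map1 (G.D a) = H.D (map2 a)
  map_Ad : ∀ {x y : G.Obj} (g : G.Hom x y) (a : G.G2 x),
    map2 (G.Ad g a) = H.Ad (map1 g) (map2 a)

namespace CrossedGroupoidHom

/-- Identity morphism of crossed groupoids. -/
def id (G : CrossedGroupoid) : CrossedGroupoidHom G G where
  obj := fun x => x
  map1 := fun f => f
  map2 := fun a => a
  map1_comp := fun _ _ => rfl
  map1_id := fun _ => rfl
  map2_mul := fun _ _ => rfl
  map_D := fun _ => rfl
  map_Ad := fun _ _ => rfl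

/-- Composition of morphisms of crossed groupoids. -/
def comp {G H K : CrossedGroupoid} (F₂ : CrossedGroupoidHom H K) (F₁ : CrossedGroupoidHom G H) :
    CrossedGroupoidHom G K where
  obj := fun x => F₂.obj (F₁.obj x)
  map1 := fun f => F₂.map1 (F₁.map1 f)
  map2 := fun a => F₂.map2 (F₁.map2 a)
  map1_comp := fun g f => by rw [F₁.map1_comp, F₂.map1_comp]
  map1_id := fun x => by rw [F₁.map1_id, F₂.map1_id]
  map2_mul := fun a b => by rw [F₁.map2_mul, F₂.map2_mul]
  map_D := fun a => by rw [F₁.map_D, F₂.map_D]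
  map_Ad := fun g a => by rw [F₁.map_Ad, F₂.map_Ad]

variable {G H : CrossedGroupoid}

/-- The induced map on π₀. -/
def pi0map (F : CrossedGroupoidHom G H) : G.pi0 → H.pi0 :=
  Quot.map F.obj (fun _ _ h => ⟨F.map1 h.some⟩)

/-- The induced map on π₁(−, x, x'). -/
def pi1'map (F : CrossedGroupoidHom G H) (x x' : G.Obj) :
    G.pi1' x x' → H.pi1' (F.obj x) (F.obj x') :=
  Quot.map F.map1 (by
    rintro g g' ⟨a, rfl⟩
    exact ⟨F.map2 a, by rw [F.map1_comp, F.map_D]⟩)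

/-- The induced map on π₁(−, x). -/
def pi1map (F : CrossedGroupoidHom G H) (x : G.Obj) : G.pi1 x → H.pi1 (F.obj x) :=
  F.pi1'map x x

/-- The induced map on π₂(−, x). -/
def pi2map (F : CrossedGroupoidHom G H) (x : G.Obj) : G.pi2 x → H.pi2 (F.obj x) :=
  fun a => ⟨F.map2 a.1, by rw [← F.map_D, a.2, F.map1_id]⟩

/-- A weak equivalence of crossed groupoids: bijective on π₀, π₁ and π₂. -/
def IsWeakEquiv (F : CrossedGroupoidHom G H) : Prop :=
  Function.Bijective F.pi0map ∧ (∀ x, Function.Bijective (F.pi1map x)) ∧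
    (∀ x, Function.Bijective (F.pi2map x))

end CrossedGroupoidHom

/-! ### Combinatorics of the simplex category -/

/-- The vertex (i) of Δ^q, as a monotone map Δ⁰ → Δ^q. -/
def vtxMap {q : ℕ} (i : Fin (q + 1)) : Fin 1 →o Fin (q + 1) :=
  ⟨fun _ => i, fun _ _ _ => le_rfl⟩

/-- The edge (i,j) of Δ^q, as a monotone map Δ¹ → Δ^q. -/
def edgeMap {q : ℕ} (i j : Fin (q + 1)) (h : i ≤ j) : Fin 2 →o Fin (q + 1) :=
  ⟨fun k => if (k : ℕ) = 0 then i else j, by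
    intro a b hab
    have hab' : (a : ℕ) ≤ (b : ℕ) := hab
    show (if (a : ℕ) = 0 then i else j) ≤ (if (b : ℕ) = 0 then i else j)
    by_cases ha : (a : ℕ) = 0
    · by_cases hb : (b : ℕ) = 0
      · rw [if_pos ha, if_pos hb]
      · rw [if_pos ha, if_neg hb]; exact h
    · have hb : ¬ (b : ℕ) = 0 := fun hb0 => ha (Nat.le_zero.mp (hb0 ▸ hab'))
      rw [if_neg ha, if_neg hb]⟩

/-- The triangle (i,j,k) of Δ^q, as a monotone map Δ² → Δ^q. -/
def triMap {q : ℕ} (i j k : Fin (q + 1)) (hij : i ≤ j) (hjk : j ≤ k) :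
    Fin 3 →o Fin (q + 1) :=
  ⟨fun m => if (m : ℕ) = 0 then i else if (m : ℕ) = 1 then j else k, by
    intro a b hab
    have hab' : (a : ℕ) ≤ (b : ℕ) := hab
    show (if (a : ℕ) = 0 then i else if (a : ℕ) = 1 then j else k) ≤
      (if (b : ℕ) = 0 then i else if (b : ℕ) = 1 then j else k)
    by_cases ha0 : (a : ℕ) = 0
    · by_cases hb0 : (b : ℕ) = 0
      · rw [if_pos ha0, if_pos hb0]
      · by_cases hb1 : (b : ℕ) = 1
        · rw [if_pos ha0, if_neg hb0, if_pos hb1]; exact hij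
        · rw [if_pos ha0, if_neg hb0, if_neg hb1]; exact hij.trans hjk
    · by_cases ha1 : (a : ℕ) = 1
      · have hb0 : ¬ (b : ℕ) = 0 := by omega
        by_cases hb1 : (b : ℕ) = 1
        · rw [if_neg ha0, if_pos ha1, if_neg hb0, if_pos hb1]
        · rw [if_neg ha0, if_pos ha1, if_neg hb0, if_neg hb1]; exact hjk
      · have hb0 : ¬ (b : ℕ) = 0 := by omega
        have hb1 : ¬ (b : ℕ) = 1 := by omega
        rw [if_neg ha0, if_neg ha1, if_neg hb0, if_neg hb1]⟩

theorem comp_vtxMap {p q : ℕ} (α : Fin (p + 1) →o Fin (q + 1)) (i : Fin (p + 1)) :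
    α.comp (vtxMap i) = vtxMap (α i) := rfl

/-! ### Cosimplicial crossed groupoids -/

/-- A cosimplicial crossed groupoid: a functor Δ → CrGrpd. -/
structure CosimplicialCrossedGroupoid : Type 1 where
  obj : ℕ → CrossedGroupoid
  map : ∀ {p q : ℕ}, (Fin (p + 1) →o Fin (q + 1)) → CrossedGroupoidHom (obj p) (obj q)
  map_id : ∀ p, map (OrderHom.id : Fin (p + 1) →o Fin (p + 1)) = CrossedGroupoidHom.id (obj p)
  map_comp : ∀ {p q r : ℕ} (β : Fin (q + 1) →o Fin (r + 1)) (α : Fin (p + 1) →o Fin (q + 1)),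
    map (β.comp α) = (map β).comp (map α)

namespace CosimplicialCrossedGroupoid

variable (G : CosimplicialCrossedGroupoid)

theorem obj_comp {p q r : ℕ} (β : Fin (q + 1) →o Fin (r + 1)) (α : Fin (p + 1) →o Fin (q + 1))
    (x : (G.obj p).Obj) :
    (G.map β).obj ((G.map α).obj x) = (G.map (β.comp α)).obj x := by
  rw [G.map_comp]; rfl

/-- The object x of G⁰ pushed to the vertex (i) of Δ^q. -/
def X (x : (G.obj 0).Obj) (q : ℕ) (i : Fin (q + 1)) : (G.obj q).Obj :=
  (G.map (vtxMap i)).obj x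

theorem X_push (x : (G.obj 0).Obj) {p q : ℕ} (α : Fin (p + 1) →o Fin (q + 1))
    (i : Fin (p + 1)) : (G.map α).obj (G.X x p i) = G.X x q (α i) := by
  unfold X
  rw [obj_comp, comp_vtxMap]

/-- Pushing a 1-morphism between vertex objects along α. -/
def push1 {x : (G.obj 0).Obj} {p q : ℕ} (α : Fin (p + 1) →o Fin (q + 1))
    {i j : Fin (p + 1)} (g : (G.obj p).Hom (G.X x p i) (G.X x p j)) :
    (G.obj q).Hom (G.X x q (α i)) (G.X x q (α j)) :=
  (G.obj q).hcast (G.X_push x α i) (G.X_push x α j) ((G.map α).map1 g)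

/-- Pushing a 2-morphism at a vertex object along α. -/
def push2 {x : (G.obj 0).Obj} {p q : ℕ} (α : Fin (p + 1) →o Fin (q + 1))
    {i : Fin (p + 1)} (a : (G.obj p).G2 (G.X x p i)) :
    (G.obj q).G2 (G.X x q (α i)) :=
  (G.obj q).cast2 (G.X_push x α i) ((G.map α).map2 a)

/-- Yekutieli's combinatorial descent conditions (Definition 1.5):
the failure-of-1-cocycle condition and the twisted 2-cocycle condition. -/
def IsDescent (x : (G.obj 0).Obj)
    (g : (G.obj 1).Hom (G.X x 1 0) (G.X x 1 1))
    (a : (G.obj 2).G2 (G.X x 2 0)) : Prop :=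
  ((G.obj 2).comp ((G.obj 2).comp ((G.obj 2).inv (G.push1 (edgeMap 0 2 (by decide)) g))
      (G.push1 (edgeMap 1 2 (by decide)) g)) (G.push1 (edgeMap 0 1 (by decide)) g)
    = (G.obj 2).D a)
  ∧
  ((G.obj 3).mul ((G.obj 3).mul
        ((G.obj 3).inv2 (G.push2 (triMap 0 1 3 (by decide) (by decide)) a))
        (G.push2 (triMap 0 2 3 (by decide) (by decide)) a))
      (G.push2 (triMap 0 1 2 (by decide) (by decide)) a)
    = (G.obj 3).Ad ((G.obj 3).inv (G.push1 (edgeMap 0 1 (by decide)) g))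
        (G.push2 (triMap 1 2 3 (by decide) (by decide)) a))

/-- A combinatorial descent datum (Definition 1.5). -/
structure Desc (G : CosimplicialCrossedGroupoid) where
  x : (G.obj 0).Obj
  g : (G.obj 1).Hom (G.X x 1 0) (G.X x 1 1)
  a : (G.obj 2).G2 (G.X x 2 0)
  isDescent : G.IsDescent x g a

/-- The Yekutieli gauge-transformation conditions (Definition 1.7) for a pair (f, c). -/
def IsGauge (x : (G.obj 0).Obj) (g : (G.obj 1).Hom (G.X x 1 0) (G.X x 1 1))
    (a : (G.obj 2).G2 (G.X x 2 0))
    (x' : (G.obj 0).Obj) (g' : (G.obj 1).Hom (G.X x' 1 0) (G.X x' 1 1))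
    (a' : (G.obj 2).G2 (G.X x' 2 0))
    (f : (G.obj 0).Hom x x') (c : (G.obj 1).G2 (G.X x 1 0)) : Prop :=
  (g' = (G.obj 1).comp ((G.obj 1).comp ((G.obj 1).comp
      ((G.map (vtxMap (1 : Fin 2))).map1 f) g) ((G.obj 1).D c))
      ((G.obj 1).inv ((G.map (vtxMap (0 : Fin 2))).map1 f)))
  ∧
  (a' = (G.obj 2).Ad ((G.map (vtxMap (0 : Fin 3))).map1 f)
    ((G.obj 2).mul ((G.obj 2).mul ((G.obj 2).mul
        ((G.obj 2).inv2 (G.push2 (edgeMap 0 2 (by decide)) c)) a)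
        ((G.obj 2).Ad ((G.obj 2).inv (G.push1 (edgeMap 0 1 (by decide)) g))
          (G.push2 (edgeMap 1 2 (by decide)) c)))
      (G.push2 (edgeMap 0 1 (by decide)) c)))

/-- Gauge equivalence of descent data. -/
def GaugeEquiv (P Q : G.Desc) : Prop :=
  ∃ (f : (G.obj 0).Hom P.x Q.x) (c : (G.obj 1).G2 (G.X P.x 1 0)),
    G.IsGauge P.x P.g P.a Q.x Q.g Q.a f c

/-- The explicit formula for the transported 2-morphism a'
(Definition 1.7(ii) / Lemma 1.9). -/
def transportA {x x' : (G.obj 0).Obj} (f : (G.obj 0).Hom x x')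
    (g : (G.obj 1).Hom (G.X x 1 0) (G.X x 1 1))
    (a : (G.obj 2).G2 (G.X x 2 0)) (c : (G.obj 1).G2 (G.X x 1 0)) :
    (G.obj 2).G2 (G.X x' 2 0) :=
  (G.obj 2).Ad ((G.map (vtxMap (0 : Fin 3))).map1 f)
    ((G.obj 2).mul ((G.obj 2).mul ((G.obj 2).mul
        ((G.obj 2).inv2 (G.push2 (edgeMap 0 2 (by decide)) c)) a)
        ((G.obj 2).Ad ((G.obj 2).inv (G.push1 (edgeMap 0 1 (by decide)) g))
          (G.push2 (edgeMap 1 2 (by decide)) c)))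
      (G.push2 (edgeMap 0 1 (by decide)) c))

end CosimplicialCrossedGroupoid

/-- A morphism of cosimplicial crossed groupoids. -/
structure CosimplicialMor (G H : CosimplicialCrossedGroupoid) where
  app : ∀ p, CrossedGroupoidHom (G.obj p) (H.obj p)
  naturality : ∀ {p q : ℕ} (α : Fin (p + 1) →o Fin (q + 1)),
    (app q).comp (G.map α) = (H.map α).comp (app p)

namespace CosimplicialMor

variable {G H : CosimplicialCrossedGroupoid}

theorem app_X (F : CosimplicialMor G H) (x : (G.obj 0).Obj) (q : ℕ) (i : Fin (q + 1)) :
    (F.app q).obj (G.X x q i) = H.X ((F.app 0).obj x) q i :=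
  congrFun (congrArg CrossedGroupoidHom.obj (F.naturality (vtxMap i))) x

/-- Image of an object of G⁰. -/
def objD (F : CosimplicialMor G H) (x : (G.obj 0).Obj) : (H.obj 0).Obj := (F.app 0).obj x

/-- Image of a 1-morphism in dimension 0. -/
def mapF (F : CosimplicialMor G H) {x x' : (G.obj 0).Obj} (f : (G.obj 0).Hom x x') :
    (H.obj 0).Hom (F.objD x) (F.objD x') := (F.app 0).map1 f

/-- Image of the 1-morphism part of a descent datum. -/
def mapG (F : CosimplicialMor G H) {x : (G.obj 0).Obj}
    (g : (G.obj 1).Hom (G.X x 1 0) (G.X x 1 1)) :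
    (H.obj 1).Hom (H.X (F.objD x) 1 0) (H.X (F.objD x) 1 1) :=
  (H.obj 1).hcast (F.app_X x 1 0) (F.app_X x 1 1) ((F.app 1).map1 g)

/-- Image of the 2-morphism part of a descent datum. -/
def mapA (F : CosimplicialMor G H) {x : (G.obj 0).Obj} (a : (G.obj 2).G2 (G.X x 2 0)) :
    (H.obj 2).G2 (H.X (F.objD x) 2 0) :=
  (H.obj 2).cast2 (F.app_X x 2 0) ((F.app 2).map2 a)

/-- Image of the 2-morphism part of a gauge transformation. -/
def mapC (F : CosimplicialMor G H) {x : (G.obj 0).Obj} (c : (G.obj 1).G2 (G.X x 1 0)) :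
    (H.obj 1).G2 (H.X (F.objD x) 1 0) :=
  (H.obj 1).cast2 (F.app_X x 1 0) ((F.app 1).map2 c)

/-- A weak equivalence of cosimplicial crossed groupoids. -/
def IsWeakEquiv (F : CosimplicialMor G H) : Prop := ∀ p, (F.app p).IsWeakEquiv

end CosimplicialMor


/-! A gauge pair `(f, c)` acts on an edge by `g ↦ f₁ ∘ g ∘ D(c) ∘ f₀⁻¹` and on a triangle by
`a ↦ Ad(f₀)(c₀₂⁻¹ ∘ a ∘ Ad(g₀₁⁻¹)(c₁₂) ∘ c₀₁)`. In a single crossed groupoid this action carries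
solutions of `g₀₂⁻¹ ∘ g₁₂ ∘ g₀₁ = D(a)` to solutions (equivariance of `D`), and, given that,
solutions of the twisted 2-cocycle equation to solutions (Peiffer identity). The cosimplicial
maps are morphisms of crossed groupoids, so pushing the transformed datum `(g', a')` along the
faces of `Δ²` and `Δ³` gives the gauge transforms of the pushed faces of `(g, a)`, which are
exactly the instances needed for the two descent conditions on `(x', g', a')`. Uniqueness is
immediate: the gauge condition on `a'` is the defining formula. -/

namespace CrossedGroupoid

variable {H : CrossedGroupoid}

instance (x : H.Obj) : Group (H.G2 x) where
  mul := H.mul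
  one := H.one x
  inv := H.inv2
  mul_assoc := H.mul_assoc
  one_mul := H.one_mul
  mul_one := H.mul_one
  inv_mul_cancel := H.inv2_mul

theorem mul_eq_mul {x : H.Obj} (a b : H.G2 x) : H.mul a b = a * b := rfl

theorem inv2_eq_inv {x : H.Obj} (a : H.G2 x) : H.inv2 a = a⁻¹ := rfl

theorem inv_comp_cancel_left {x y z : H.Obj} (g : H.Hom y z) (f : H.Hom x y) :
    H.comp (H.inv g) (H.comp g f) = f := by
  rw [← H.comp_assoc, H.inv_comp, H.id_comp]

theorem comp_inv_cancel_left {x y z : H.Obj} (g : H.Hom z y) (f : H.Hom x y) :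
    H.comp g (H.comp (H.inv g) f) = f := by
  rw [← H.comp_assoc, H.comp_inv, H.id_comp]

theorem eq_inv_of_comp_eq_id {x y : H.Obj} {g : H.Hom x y} {k : H.Hom y x}
    (h : H.comp k g = H.id x) : k = H.inv g := by
  rw [← H.comp_id k, ← H.comp_inv g, ← H.comp_assoc, h, H.id_comp]

theorem inv_comp_rev {x y z : H.Obj} (g : H.Hom y z) (f : H.Hom x y) :
    H.inv (H.comp g f) = H.comp (H.inv f) (H.inv g) := by
  refine (eq_inv_of_comp_eq_id ?_).symm
  rw [H.comp_assoc, inv_comp_cancel_left, H.inv_comp]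

theorem inv_inv {x y : H.Obj} (f : H.Hom x y) : H.inv (H.inv f) = f :=
  (eq_inv_of_comp_eq_id (H.comp_inv f)).symm

theorem D_inv2 {x : H.Obj} (a : H.G2 x) : H.D (H.inv2 a) = H.inv (H.D a) :=
  eq_inv_of_comp_eq_id (by rw [← H.D_mul, H.inv2_mul, H.D_one])

theorem Ad_inv2 {x y : H.Obj} (g : H.Hom x y) (a : H.G2 x) :
    H.Ad g (H.inv2 a) = H.inv2 (H.Ad g a) :=
  map_inv (MonoidHom.mk' (H.Ad g) (H.Ad_mul g)) a

def IsCocycleFailure {x₀ x₁ x₂ : H.Obj} (g₀₁ : H.Hom x₀ x₁) (g₁₂ : H.Hom x₁ x₂)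
    (g₀₂ : H.Hom x₀ x₂) (a : H.G2 x₀) : Prop :=
  H.comp (H.comp (H.inv g₀₂) g₁₂) g₀₁ = H.D a

def IsTwistedCocycle {x₀ x₁ : H.Obj} (g₀₁ : H.Hom x₀ x₁) (a₀₁₂ a₀₁₃ a₀₂₃ : H.G2 x₀)
    (a₁₂₃ : H.G2 x₁) : Prop :=
  H.mul (H.mul (H.inv2 a₀₁₃) a₀₂₃) a₀₁₂ = H.Ad (H.inv g₀₁) a₁₂₃

def gaugeHom {x₀ x₁ y₀ y₁ : H.Obj} (f₀ : H.Hom x₀ y₀) (f₁ : H.Hom x₁ y₁) (g : H.Hom x₀ x₁)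
    (c : H.G2 x₀) : H.Hom y₀ y₁ :=
  H.comp (H.comp (H.comp f₁ g) (H.D c)) (H.inv f₀)

def gaugeG2 {x₀ x₁ y₀ : H.Obj} (f₀ : H.Hom x₀ y₀) (g₀₁ : H.Hom x₀ x₁) (a c₀₁ c₀₂ : H.G2 x₀)
    (c₁₂ : H.G2 x₁) : H.G2 y₀ :=
  H.Ad f₀ (H.mul (H.mul (H.mul (H.inv2 c₀₂) a) (H.Ad (H.inv g₀₁) c₁₂)) c₀₁)

theorem IsCocycleFailure.gauge {x₀ x₁ x₂ y₀ y₁ y₂ : H.Obj} {g₀₁ : H.Hom x₀ x₁}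
    {g₁₂ : H.Hom x₁ x₂} {g₀₂ : H.Hom x₀ x₂} {a : H.G2 x₀}
    (h : IsCocycleFailure g₀₁ g₁₂ g₀₂ a) (f₀ : H.Hom x₀ y₀) (f₁ : H.Hom x₁ y₁)
    (f₂ : H.Hom x₂ y₂) (c₀₁ c₀₂ : H.G2 x₀) (c₁₂ : H.G2 x₁) :
    IsCocycleFailure (gaugeHom f₀ f₁ g₀₁ c₀₁) (gaugeHom f₁ f₂ g₁₂ c₁₂) (gaugeHom f₀ f₂ g₀₂ c₀₂)
      (gaugeG2 f₀ g₀₁ a c₀₁ c₀₂ c₁₂) := by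
  have h' : ∀ {w} (k : H.Hom w x₀),
      H.comp (H.inv g₀₂) (H.comp g₁₂ (H.comp g₀₁ k)) = H.comp (H.D a) k := by
    intro w k
    rw [← h]
    simp only [H.comp_assoc]
  have hD : ∀ {w} (k : H.Hom w x₀), H.comp (H.D c₁₂) (H.comp g₀₁ k)
      = H.comp g₀₁ (H.comp (H.D (H.Ad (H.inv g₀₁) c₁₂)) k) := by
    intro w k
    rw [H.D_Ad, inv_inv]
    simp only [H.comp_assoc, comp_inv_cancel_left]
  unfold IsCocycleFailure gaugeHom gaugeG2
  rw [H.D_Ad, H.D_mul, H.D_mul, H.D_mul, D_inv2]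
  simp only [inv_comp_rev, inv_inv, H.comp_assoc, inv_comp_cancel_left, hD, h']

theorem IsTwistedCocycle.gauge {x₀ x₁ x₂ y₀ y₁ : H.Obj} {g₀₁ : H.Hom x₀ x₁}
    {g₁₂ : H.Hom x₁ x₂} {g₀₂ : H.Hom x₀ x₂} {a₀₁₂ a₀₁₃ a₀₂₃ : H.G2 x₀} {a₁₂₃ : H.G2 x₁}
    (hfail : IsCocycleFailure g₀₁ g₁₂ g₀₂ a₀₁₂) (h : IsTwistedCocycle g₀₁ a₀₁₂ a₀₁₃ a₀₂₃ a₁₂₃)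
    (f₀ : H.Hom x₀ y₀) (f₁ : H.Hom x₁ y₁) (c₀₁ c₀₂ c₀₃ : H.G2 x₀) (c₁₂ c₁₃ : H.G2 x₁)
    (c₂₃ : H.G2 x₂) :
    IsTwistedCocycle (gaugeHom f₀ f₁ g₀₁ c₀₁) (gaugeG2 f₀ g₀₁ a₀₁₂ c₀₁ c₀₂ c₁₂)
      (gaugeG2 f₀ g₀₁ a₀₁₃ c₀₁ c₀₃ c₁₃) (gaugeG2 f₀ g₀₂ a₀₂₃ c₀₂ c₀₃ c₂₃)
      (gaugeG2 f₁ g₁₂ a₁₂₃ c₁₂ c₁₃ c₂₃) := by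
  -- `g₁₂ ∘ g₀₁ = g₀₂ ∘ D(a₀₁₂)`, and `Ad ∘ D` is conjugation (Peiffer)
  have hc₂₃ : H.Ad (H.inv g₀₁) (H.Ad (H.inv g₁₂) c₂₃)
      = H.mul (H.mul (H.inv2 a₀₁₂) (H.Ad (H.inv g₀₂) c₂₃)) a₀₁₂ := by
    have : H.inv (H.comp g₁₂ g₀₁) = H.comp (H.D (H.inv2 a₀₁₂)) (H.inv g₀₂) := by
      rw [D_inv2, ← hfail]
      simp only [inv_comp_rev, inv_inv, H.comp_assoc, H.comp_inv, H.comp_id]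
    rw [← H.Ad_comp, ← inv_comp_rev, this, H.Ad_comp, H.peiffer]
    simp only [mul_eq_mul, inv2_eq_inv, _root_.inv_inv]
  unfold IsTwistedCocycle gaugeHom gaugeG2 at *
  rw [inv_comp_rev, inv_comp_rev, inv_comp_rev, inv_inv, H.Ad_comp, H.Ad_comp, H.Ad_comp,
    ← H.Ad_comp (H.inv f₁) f₁, H.inv_comp, H.Ad_id, ← D_inv2, H.peiffer]
  simp only [← h, hc₂₃, H.Ad_mul, Ad_inv2]
  simp only [mul_eq_mul, inv2_eq_inv]
  group

theorem hcast_comp {x x' y y' z z' : H.Obj} (ex : x = x') (ey : y = y') (ez : z = z')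
    (h : H.Hom y z) (g : H.Hom x y) :
    H.hcast ex ez (H.comp h g) = H.comp (H.hcast ey ez h) (H.hcast ex ey g) := by
  subst ex ey ez; rfl

theorem hcast_inv {x x' y y' : H.Obj} (ex : x = x') (ey : y = y') (g : H.Hom x y) :
    H.hcast ey ex (H.inv g) = H.inv (H.hcast ex ey g) := by
  subst ex ey; rfl

theorem hcast_D {x x' : H.Obj} (ex : x = x') (a : H.G2 x) :
    H.hcast ex ex (H.D a) = H.D (H.cast2 ex a) := by
  subst ex; rfl

theorem hcast_hcast {x x' x'' y y' y'' : H.Obj} (ex : x = x') (ey : y = y') (ex' : x' = x'')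
    (ey' : y' = y'') (g : H.Hom x y) :
    H.hcast ex' ey' (H.hcast ex ey g) = H.hcast (ex.trans ex') (ey.trans ey') g := by
  subst ex ey ex' ey'; rfl

theorem cast2_mul {x x' : H.Obj} (ex : x = x') (a b : H.G2 x) :
    H.cast2 ex (H.mul a b) = H.mul (H.cast2 ex a) (H.cast2 ex b) := by
  subst ex; rfl

theorem cast2_inv2 {x x' : H.Obj} (ex : x = x') (a : H.G2 x) :
    H.cast2 ex (H.inv2 a) = H.inv2 (H.cast2 ex a) := by
  subst ex; rfl

theorem cast2_Ad {x x' y y' : H.Obj} (ex : x = x') (ey : y = y') (g : H.Hom x y)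
    (a : H.G2 x) : H.cast2 ey (H.Ad g a) = H.Ad (H.hcast ex ey g) (H.cast2 ex a) := by
  subst ex ey; rfl

theorem cast2_cast2 {x x' x'' : H.Obj} (ex : x = x') (ex' : x' = x'') (a : H.G2 x) :
    H.cast2 ex' (H.cast2 ex a) = H.cast2 (ex.trans ex') a := by
  subst ex ex'; rfl

end CrossedGroupoid

namespace CrossedGroupoidHom

variable {G H : CrossedGroupoid}

theorem map1_hcast (F : CrossedGroupoidHom G H) {x x' y y' : G.Obj} (ex : x = x') (ey : y = y')
    (f : G.Hom x y) :
    F.map1 (G.hcast ex ey f) = H.hcast (congrArg F.obj ex) (congrArg F.obj ey) (F.map1 f) := by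
  subst ex ey; rfl

theorem map2_cast2 (F : CrossedGroupoidHom G H) {x x' : G.Obj} (ex : x = x') (a : G.G2 x) :
    F.map2 (G.cast2 ex a) = H.cast2 (congrArg F.obj ex) (F.map2 a) := by
  subst ex; rfl

theorem map1_of_eq {F F' : CrossedGroupoidHom G H} (hF : F = F') {x y : G.Obj}
    (f : G.Hom x y) :
    F'.map1 f = H.hcast (congrFun (congrArg obj hF) x) (congrFun (congrArg obj hF) y)
      (F.map1 f) := by
  subst hF; rfl

theorem map2_of_eq {F F' : CrossedGroupoidHom G H} (hF : F = F') {x : G.Obj} (a : G.G2 x) :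
    F'.map2 a = H.cast2 (congrFun (congrArg obj hF) x) (F.map2 a) := by
  subst hF; rfl

theorem map1_inv (F : CrossedGroupoidHom G H) {x y : G.Obj} (f : G.Hom x y) :
    F.map1 (G.inv f) = H.inv (F.map1 f) := by
  refine CrossedGroupoid.eq_inv_of_comp_eq_id ?_
  rw [← F.map1_comp, G.inv_comp, F.map1_id]

theorem map2_inv2 (F : CrossedGroupoidHom G H) {x : G.Obj} (a : G.G2 x) :
    F.map2 (G.inv2 a) = H.inv2 (F.map2 a) :=
  map_inv (MonoidHom.mk' F.map2 F.map2_mul) a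

end CrossedGroupoidHom

theorem comp_edgeMap {p q : ℕ} (α : Fin (p + 1) →o Fin (q + 1)) (i j : Fin (p + 1)) (h : i ≤ j) :
    α.comp (edgeMap i j h) = edgeMap (α i) (α j) (α.monotone.imp h) := by
  ext m; fin_cases m <;> rfl

namespace CosimplicialCrossedGroupoid

open CrossedGroupoid (gaugeHom gaugeG2 IsCocycleFailure IsTwistedCocycle)

variable (G : CosimplicialCrossedGroupoid)

theorem map1_map_of_eq {p q : ℕ} {α β : Fin (p + 1) →o Fin (q + 1)} (h : α = β)
    {x y : (G.obj p).Obj} (f : (G.obj p).Hom x y) :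
    (G.map β).map1 f = (G.obj q).hcast (by rw [h]) (by rw [h]) ((G.map α).map1 f) :=
  CrossedGroupoidHom.map1_of_eq (congrArg G.map h) f

theorem map2_map_of_eq {p q : ℕ} {α β : Fin (p + 1) →o Fin (q + 1)} (h : α = β)
    {x : (G.obj p).Obj} (a : (G.obj p).G2 x) :
    (G.map β).map2 a = (G.obj q).cast2 (by rw [h]) ((G.map α).map2 a) :=
  CrossedGroupoidHom.map2_of_eq (congrArg G.map h) a

theorem map1_map {p q r : ℕ} (β : Fin (q + 1) →o Fin (r + 1)) (α : Fin (p + 1) →o Fin (q + 1))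
    {x y : (G.obj p).Obj} (f : (G.obj p).Hom x y) :
    (G.map β).map1 ((G.map α).map1 f)
      = (G.obj r).hcast (G.obj_comp β α x).symm (G.obj_comp β α y).symm
        ((G.map (β.comp α)).map1 f) :=
  CrossedGroupoidHom.map1_of_eq (G.map_comp β α) f

theorem map2_map {p q r : ℕ} (β : Fin (q + 1) →o Fin (r + 1)) (α : Fin (p + 1) →o Fin (q + 1))
    {x : (G.obj p).Obj} (a : (G.obj p).G2 x) :
    (G.map β).map2 ((G.map α).map2 a)
      = (G.obj r).cast2 (G.obj_comp β α x).symm ((G.map (β.comp α)).map2 a) :=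
  CrossedGroupoidHom.map2_of_eq (G.map_comp β α) a

def pushHom {x y : (G.obj 0).Obj} {p q : ℕ} (α : Fin (p + 1) →o Fin (q + 1))
    {i j : Fin (p + 1)} (g : (G.obj p).Hom (G.X x p i) (G.X y p j)) :
    (G.obj q).Hom (G.X x q (α i)) (G.X y q (α j)) :=
  (G.obj q).hcast (G.X_push x α i) (G.X_push y α j) ((G.map α).map1 g)

theorem push1_eq_pushHom {x : (G.obj 0).Obj} {p q : ℕ} (α : Fin (p + 1) →o Fin (q + 1))
    {i j : Fin (p + 1)} (g : (G.obj p).Hom (G.X x p i) (G.X x p j)) :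
    G.push1 α g = G.pushHom α g := rfl

section

variable {p q : ℕ} (α : Fin (p + 1) →o Fin (q + 1))

theorem pushHom_comp {x y z : (G.obj 0).Obj} {i j k : Fin (p + 1)}
    (h : (G.obj p).Hom (G.X y p j) (G.X z p k)) (g : (G.obj p).Hom (G.X x p i) (G.X y p j)) :
    G.pushHom α ((G.obj p).comp h g) = (G.obj q).comp (G.pushHom α h) (G.pushHom α g) := by
  rw [pushHom, CrossedGroupoidHom.map1_comp, CrossedGroupoid.hcast_comp]; rfl

theorem pushHom_inv {x y : (G.obj 0).Obj} {i j : Fin (p + 1)}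
    (g : (G.obj p).Hom (G.X x p i) (G.X y p j)) :
    G.pushHom α ((G.obj p).inv g) = (G.obj q).inv (G.pushHom α g) := by
  rw [pushHom, CrossedGroupoidHom.map1_inv, CrossedGroupoid.hcast_inv]; rfl

theorem pushHom_D {x : (G.obj 0).Obj} {i : Fin (p + 1)} (a : (G.obj p).G2 (G.X x p i)) :
    G.pushHom α ((G.obj p).D a) = (G.obj q).D (G.push2 α a) := by
  rw [pushHom, CrossedGroupoidHom.map_D, CrossedGroupoid.hcast_D]; rfl

theorem push2_mul {x : (G.obj 0).Obj} {i : Fin (p + 1)} (a b : (G.obj p).G2 (G.X x p i)) :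
    G.push2 α ((G.obj p).mul a b) = (G.obj q).mul (G.push2 α a) (G.push2 α b) := by
  rw [push2, CrossedGroupoidHom.map2_mul, CrossedGroupoid.cast2_mul]; rfl

theorem push2_inv2 {x : (G.obj 0).Obj} {i : Fin (p + 1)} (a : (G.obj p).G2 (G.X x p i)) :
    G.push2 α ((G.obj p).inv2 a) = (G.obj q).inv2 (G.push2 α a) := by
  rw [push2, CrossedGroupoidHom.map2_inv2, CrossedGroupoid.cast2_inv2]; rfl

theorem push2_Ad {x y : (G.obj 0).Obj} {i j : Fin (p + 1)}
    (g : (G.obj p).Hom (G.X x p i) (G.X y p j)) (a : (G.obj p).G2 (G.X x p i)) :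
    G.push2 α ((G.obj p).Ad g a) = (G.obj q).Ad (G.pushHom α g) (G.push2 α a) := by
  rw [push2, CrossedGroupoidHom.map_Ad, CrossedGroupoid.cast2_Ad (G.X_push x α i)]; rfl

theorem pushHom_map_vtxMap {x x' : (G.obj 0).Obj} (k : Fin (p + 1)) (f : (G.obj 0).Hom x x') :
    G.pushHom α (i := k) (j := k) ((G.map (vtxMap k)).map1 f) = (G.map (vtxMap (α k))).map1 f :=
  (congrArg ((G.obj q).hcast _ _) (G.map1_map α (vtxMap k) f)).trans
    (CrossedGroupoid.hcast_hcast _ _ _ _ _)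

theorem push1_push1_edgeMap {x : (G.obj 0).Obj} {i j : Fin (p + 1)} (hij : i ≤ j)
    (g : (G.obj 1).Hom (G.X x 1 0) (G.X x 1 1)) :
    G.push1 α (G.push1 (edgeMap i j hij) g)
      = G.push1 (edgeMap (α i) (α j) (α.monotone.imp hij)) g := by
  rw [push1, push1, push1, CrossedGroupoidHom.map1_hcast, map1_map,
    map1_map_of_eq G (comp_edgeMap α i j hij), CrossedGroupoid.hcast_hcast,
    CrossedGroupoid.hcast_hcast, CrossedGroupoid.hcast_hcast]
  rfl

theorem push2_push2_edgeMap {x : (G.obj 0).Obj} {i j : Fin (p + 1)} (hij : i ≤ j)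
    (c : (G.obj 1).G2 (G.X x 1 0)) :
    G.push2 α (G.push2 (edgeMap i j hij) c)
      = G.push2 (edgeMap (α i) (α j) (α.monotone.imp hij)) c := by
  rw [push2, push2, push2, CrossedGroupoidHom.map2_cast2, map2_map,
    map2_map_of_eq G (comp_edgeMap α i j hij), CrossedGroupoid.cast2_cast2,
    CrossedGroupoid.cast2_cast2, CrossedGroupoid.cast2_cast2]
  rfl

theorem isCocycleFailure_push1 {x : (G.obj 0).Obj} {i₀ i₁ i₂ : Fin (p + 1)}
    {g₀₁ : (G.obj p).Hom (G.X x p i₀) (G.X x p i₁)} {g₁₂ : (G.obj p).Hom (G.X x p i₁) (G.X x p i₂)}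
    {g₀₂ : (G.obj p).Hom (G.X x p i₀) (G.X x p i₂)} {a : (G.obj p).G2 (G.X x p i₀)}
    (h : IsCocycleFailure g₀₁ g₁₂ g₀₂ a) :
    IsCocycleFailure (G.push1 α g₀₁) (G.push1 α g₁₂) (G.push1 α g₀₂) (G.push2 α a) := by
  unfold IsCocycleFailure at h ⊢
  rw [push1_eq_pushHom, push1_eq_pushHom, push1_eq_pushHom, ← pushHom_inv, ← pushHom_comp,
    ← pushHom_comp, h, pushHom_D]

end

variable {q : ℕ}

theorem push1_gaugeHom {x x' : (G.obj 0).Obj} (f : (G.obj 0).Hom x x')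
    (g : (G.obj 1).Hom (G.X x 1 0) (G.X x 1 1)) (c : (G.obj 1).G2 (G.X x 1 0))
    (α : Fin 2 →o Fin (q + 1)) :
    G.push1 α (x := x') (i := 0) (j := 1)
        (gaugeHom ((G.map (vtxMap 0)).map1 f) ((G.map (vtxMap 1)).map1 f) g c)
      = gaugeHom ((G.map (vtxMap (α 0))).map1 f) ((G.map (vtxMap (α 1))).map1 f)
          (G.push1 α g) (G.push2 α c) := by
  unfold CrossedGroupoid.gaugeHom
  -- `erw`: the endpoints `(G.map (vtxMap k)).obj x` of the vertex morphisms are `G.X x 1 k`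
  -- only after unfolding `X`
  erw [push1_eq_pushHom, pushHom_comp, pushHom_comp, pushHom_comp, pushHom_inv, pushHom_D,
    pushHom_map_vtxMap, pushHom_map_vtxMap]
  rfl

theorem push2_transportA {x x' : (G.obj 0).Obj} (f : (G.obj 0).Hom x x')
    (g : (G.obj 1).Hom (G.X x 1 0) (G.X x 1 1)) (a : (G.obj 2).G2 (G.X x 2 0))
    (c : (G.obj 1).G2 (G.X x 1 0)) (α : Fin 3 →o Fin (q + 1)) :
    G.push2 α (G.transportA f g a c)
      = gaugeG2 ((G.map (vtxMap (α 0))).map1 f)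
          (G.push1 (edgeMap (α 0) (α 1) (α.monotone.imp (by decide))) g) (G.push2 α a)
          (G.push2 (edgeMap (α 0) (α 1) (α.monotone.imp (by decide))) c)
          (G.push2 (edgeMap (α 0) (α 2) (α.monotone.imp (by decide))) c)
          (G.push2 (edgeMap (α 1) (α 2) (α.monotone.imp (by decide))) c) := by
  rw [transportA]
  erw [push2_Ad, push2_mul, push2_mul, push2_mul, push2_inv2, push2_Ad, pushHom_inv,
    pushHom_map_vtxMap, ← push1_eq_pushHom, push1_push1_edgeMap, push2_push2_edgeMap,
    push2_push2_edgeMap, push2_push2_edgeMap]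
  rfl

theorem isDescent_iff {x : (G.obj 0).Obj} (g : (G.obj 1).Hom (G.X x 1 0) (G.X x 1 1))
    (a : (G.obj 2).G2 (G.X x 2 0)) :
    G.IsDescent x g a ↔
      IsCocycleFailure (G.push1 (edgeMap (0 : Fin 3) 1 (by decide)) g)
          (G.push1 (edgeMap 1 2 (by decide)) g) (G.push1 (edgeMap 0 2 (by decide)) g) a ∧
        IsTwistedCocycle (G.push1 (edgeMap (0 : Fin 4) 1 (by decide)) g)
          (G.push2 (triMap (0 : Fin 4) 1 2 (by decide) (by decide)) a)
          (G.push2 (triMap 0 1 3 (by decide) (by decide)) a)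
          (G.push2 (triMap 0 2 3 (by decide) (by decide)) a)
          (G.push2 (triMap 1 2 3 (by decide) (by decide)) a) :=
  Iff.rfl

theorem isCocycleFailure_push1_edgeMap {x : (G.obj 0).Obj}
    {g : (G.obj 1).Hom (G.X x 1 0) (G.X x 1 1)} {a : (G.obj 2).G2 (G.X x 2 0)}
    (α : Fin 3 →o Fin (q + 1))
    (h : IsCocycleFailure (G.push1 (edgeMap (0 : Fin 3) 1 (by decide)) g)
      (G.push1 (edgeMap 1 2 (by decide)) g) (G.push1 (edgeMap 0 2 (by decide)) g) a) :
    IsCocycleFailure (G.push1 (edgeMap (α 0) (α 1) (α.monotone.imp (by decide))) g)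
      (G.push1 (edgeMap (α 1) (α 2) (α.monotone.imp (by decide))) g)
      (G.push1 (edgeMap (α 0) (α 2) (α.monotone.imp (by decide))) g) (G.push2 α a) := by
  unfold IsCocycleFailure at h ⊢
  rw [← push1_push1_edgeMap G α (show (0 : Fin 3) ≤ 1 by decide),
    ← push1_push1_edgeMap G α (show (1 : Fin 3) ≤ 2 by decide),
    ← push1_push1_edgeMap G α (show (0 : Fin 3) ≤ 2 by decide)]
  exact G.isCocycleFailure_push1 α h

variable {G} in
theorem IsDescent.gauge {x x' : (G.obj 0).Obj} {g : (G.obj 1).Hom (G.X x 1 0) (G.X x 1 1)}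
    {a : (G.obj 2).G2 (G.X x 2 0)} (h : G.IsDescent x g a) (f : (G.obj 0).Hom x x')
    (c : (G.obj 1).G2 (G.X x 1 0)) :
    G.IsDescent x' (gaugeHom ((G.map (vtxMap 0)).map1 f) ((G.map (vtxMap 1)).map1 f) g c)
      (G.transportA f g a c) := by
  obtain ⟨hfail, hcocycle⟩ := (G.isDescent_iff g a).mp h
  have hfail₀₁₂ :=
    G.isCocycleFailure_push1_edgeMap (triMap (0 : Fin 4) 1 2 (by decide) (by decide)) hfail
  rw [isDescent_iff, push1_gaugeHom, push1_gaugeHom, push1_gaugeHom, push1_gaugeHom,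
    push2_transportA, push2_transportA, push2_transportA, push2_transportA]
  exact ⟨hfail.gauge _ _ _ _ _ _, hcocycle.gauge hfail₀₁₂ _ _ _ _ _ _ _ _⟩

end CosimplicialCrossedGroupoid

/-- Lemma 1.9: a partial gauge transformation out of a descent datum
is completed by a unique 2-morphism a', given by the explicit formula `transportA`. -/
theorem partial_gauge_completion (G : CosimplicialCrossedGroupoid) (P : G.Desc)
    (x' : (G.obj 0).Obj) (g' : (G.obj 1).Hom (G.X x' 1 0) (G.X x' 1 1))
    (f : (G.obj 0).Hom P.x x') (c : (G.obj 1).G2 (G.X P.x 1 0))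
    (hpartial : g' = (G.obj 1).comp ((G.obj 1).comp ((G.obj 1).comp
      ((G.map (vtxMap (1 : Fin 2))).map1 f) P.g) ((G.obj 1).D c))
      ((G.obj 1).inv ((G.map (vtxMap (0 : Fin 2))).map1 f))) :
    (G.IsDescent x' g' (G.transportA f P.g P.a c) ∧
      G.IsGauge P.x P.g P.a x' g' (G.transportA f P.g P.a c) f c) ∧
    (∀ a' : (G.obj 2).G2 (G.X x' 2 0),
      G.IsDescent x' g' a' → G.IsGauge P.x P.g P.a x' g' a' f c →
        a' = G.transportA f P.g P.a c) := by
  subst hpartial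
  exact ⟨⟨P.isDescent.gauge f c, rfl, rfl⟩, fun _ _ hgauge => hgauge.2⟩
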